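/- Assume \alpha_2 \in (0,1) and \varphi_2 = (1-\alpha_2)\beta_2 > 1, and let t(x) = g_{\alpha_2}(1 - e^{-\beta_2 x}). Then t has a unique critical point P_c in (0,1), which is a global maximum of t on [0,1], and a unique fixed point P_f in (0,1). Moreover: (a) if t(P_c) \le P_c, then t^k(x) \to P_f as k \to \infty for every x \in (0,1), and \sigma = \psi(\beta_2 P_f); (b) if t(P_c) > P_c, then \sigma \ge \sqrt{\psi(\beta_2 P_f)\, \psi(\beta_2 P_m)}, where P_m = t(P_c). -/

import Mathlib

/-- `g α x` : the expected density after the epidemic stage on a percolated 3-tree. -/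
noncomputable def g (α x : ℝ) : ℝ :=
  if x = 0 then 0
  else (1 - Real.sqrt (1 - 4 * (1 - α) * x * (1 - x))) ^ 3 / (8 * (1 - α) ^ 2 * x ^ 2)

/-- `ψ(x) = (1 - e^{-x})/x`, with `ψ(0) = 1`. -/
noncomputable def psi (x : ℝ) : ℝ := if x = 0 then 1 else (1 - Real.exp (-x)) / x

/-- `pbar α = sup_{x ∈ [0,1]} g α x`. -/
noncomputable def pbar (α : ℝ) : ℝ := sSup (g α '' Set.Icc 0 1)

/-- The one-type map for the strong species alone: `t(x) = g_{α₂}(1 - e^{-β₂ x})`. -/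
noncomputable def tmap (α₂ β₂ : ℝ) (x : ℝ) : ℝ := g α₂ (1 - Real.exp (-(β₂ * x)))

/-- `σ = inf_{x ∈ [0,p̄₂]} liminf_n (∏_{k<n} ψ(β₂ tᵏ(x)))^{1/n}`. -/
noncomputable def sigma (α₂ β₂ : ℝ) : ℝ :=
  sInf ((fun x => Filter.liminf
      (fun n : ℕ => (∏ k ∈ Finset.range n, psi (β₂ * (tmap α₂ β₂)^[k] x)) ^ (1 / (n : ℝ)))
      Filter.atTop) '' Set.Icc 0 (pbar α₂))

/-!
On `[0, 1]` one has `g α y = 8 (1 - α) y q(y)³` with `q(y) = (1 - y) / (1 + S(y))` and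
`S(y) = √(α + (1 - α)(1 - 2y)²)`. The logarithmic derivative of `y q(y)³` has derivative at most
`-12 + 12 (1 - α) < 0`, so it is strictly decreasing and `t = g α ∘ (1 - exp (-β ·))` is
unimodal, with `P_c` where it vanishes. Since `ψ` and `q` are strictly decreasing,
`t(x) / x = 8 (1 - α) β ψ(β x) q(1 - e^{-β x})³` decreases strictly from `(1 - α) β > 1` at `0⁺`
to below `1` at `1`, which gives `P_f`.

In case (a), `t` maps `(0, ∞)` into `(0, P_c]`, where it is increasing, so orbits converge
monotonically to `P_f` and the geometric means of `ψ(β tᵏ x)` converge to `ψ(β P_f)`.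
In case (b), `P_c ≤ P_f` and all orbit points after the first lie in `[0, P_m]`; as `t` decreases
past `P_f`, of two consecutive such points one is `≤ P_f`, so consecutive factors have product at
least `ψ(β P_f) ψ(β P_m)`.
-/

open Real Set Filter Topology

section iterate

lemma monotone_iterate_of_monotoneOn {α : Type*} [Preorder α] {f : α → α} {s : Set α} {x : α}
    (hmono : MonotoneOn f s) (hmaps : MapsTo f s s) (hx : x ∈ s) (hfx : x ≤ f x) :
    Monotone fun n => f^[n] x := by
  refine monotone_nat_of_le_succ fun n => ?_
  induction n with
  | zero => exact hfx
  | succ n ih =>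
    simp only [Function.iterate_succ_apply'] at ih ⊢
    exact hmono (hmaps.iterate n hx) (hmaps (hmaps.iterate n hx)) ih

variable {f : ℝ → ℝ} {a b p x : ℝ}

lemma tendsto_iterate_of_monotoneOn (hmono : MonotoneOn f (Icc a b))
    (hcont : ContinuousOn f (Icc a b)) (hmaps : MapsTo f (Icc a b) (Icc a b))
    (huniq : ∀ y ∈ Icc a b, f y = y → y = p) (hx : x ∈ Icc a b) :
    Tendsto (fun n => f^[n] x) atTop (𝓝 p) := by
  have horb : ∀ n, f^[n] x ∈ Icc a b := fun n => hmaps.iterate n hx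
  suffices ∀ L, Tendsto (fun n => f^[n] x) atTop (𝓝 L) → L = p by
    rcases le_total x (f x) with h | h
    · have hlim := tendsto_atTop_ciSup (monotone_iterate_of_monotoneOn hmono hmaps hx h)
        ⟨b, forall_mem_range.2 fun n => (horb n).2⟩
      exact this _ hlim ▸ hlim
    · have hanti : Antitone fun n => f^[n] x := monotone_iterate_of_monotoneOn (α := ℝᵒᵈ)
        (f := f) (fun _ hu _ hv huv => hmono hv hu huv) hmaps hx h
      have hlim := tendsto_atTop_ciInf hanti ⟨a, forall_mem_range.2 fun n => (horb n).1⟩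
      exact this _ hlim ▸ hlim
  intro L hL
  have hLmem : L ∈ Icc a b := isClosed_Icc.mem_of_tendsto hL (Eventually.of_forall horb)
  refine huniq L hLmem (tendsto_nhds_unique ?_ ((tendsto_add_atTop_iff_nat 1).2 hL))
  simpa only [Function.iterate_succ_apply', Function.comp_def] using
    (hcont L hLmem).tendsto.comp (tendsto_nhdsWithin_iff.2 ⟨hL, Eventually.of_forall horb⟩)

lemma eq_of_fixedPt_of_lt_of_gt (hlt : ∀ x ∈ Ioo 0 p, x < f x) (hgt : ∀ x, p < x → f x < x)
    (hx : 0 < x) (hfx : f x = x) : x = p := by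
  rcases lt_trichotomy x p with h | h | h
  · exact absurd hfx (hlt x ⟨hx, h⟩).ne'
  · exact h
  · exact absurd hfx (hgt x h).ne

end iterate

noncomputable def geomMean (a : ℕ → ℝ) (n : ℕ) : ℝ := (∏ k ∈ Finset.range n, a k) ^ (1 / (n : ℝ))

section geomMean

variable {a : ℕ → ℝ}

lemma geomMean_eq_exp (ha : ∀ k, 0 < a k) (n : ℕ) :
    geomMean a n = exp ((n : ℝ)⁻¹ * ∑ k ∈ Finset.range n, log (a k)) := by
  rw [geomMean, rpow_def_of_pos (Finset.prod_pos fun k _ => ha k),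
    log_prod fun k _ => (ha k).ne', one_div, mul_comm]

lemma geomMean_le_one (ha0 : ∀ k, 0 ≤ a k) (ha1 : ∀ k, a k ≤ 1) (n : ℕ) : geomMean a n ≤ 1 :=
  rpow_le_one (Finset.prod_nonneg fun k _ => ha0 k)
    (Finset.prod_le_one (fun k _ => ha0 k) fun k _ => ha1 k) (by positivity)

lemma tendsto_geomMean {l : ℝ} (ha : ∀ k, 0 < a k) (hl : 0 < l)
    (h : Tendsto a atTop (𝓝 l)) : Tendsto (geomMean a) atTop (𝓝 l) := by
  have hlog := ((continuousAt_log hl.ne').tendsto.comp h).cesaro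
  have := (continuous_exp.tendsto _).comp hlog
  rw [exp_log hl] at this
  exact this.congr fun n => (geomMean_eq_exp ha n).symm

lemma sqrt_le_liminf_geomMean {c : ℝ} (hc : 0 < c) (ha : ∀ k, 0 < a k) (ha1 : ∀ k, a k ≤ 1)
    (hpair : ∀ k, c ≤ a (k + 1) * a (k + 2)) : √c ≤ liminf (geomMean a) atTop := by
  set y := fun k => log (a k)
  have hy : ∀ k, y k ≤ 0 := fun k => log_nonpos (ha k).le (ha1 k)
  have hypair : ∀ k, log c ≤ y (k + 1) + y (k + 2) := fun k => by
    rw [← log_mul (ha _).ne' (ha _).ne']; exact log_le_log hc (hpair k)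
  -- telescoping the pair bounds; the boundary term `- y (m + 1)` is `≥ 0`
  have hsum : ∀ m : ℕ, m * log c + 2 * y 0 + y 1 - y (m + 1) ≤
      2 * ∑ k ∈ Finset.range (m + 1), y k := by
    intro m
    induction m with
    | zero => simp
    | succ m ih =>
      rw [Finset.sum_range_succ]; push_cast; linarith [hypair m]
  set K := 2 * y 0 + y 1 - log c
  have hlow : Tendsto (fun n : ℕ => exp (log c / 2 + K / 2 * (n : ℝ)⁻¹)) atTop (𝓝 √c) := by
    have := ((tendsto_inv_atTop_nhds_zero_nat (𝕜 := ℝ)).const_mul (K / 2)).const_add (log c / 2)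
    rw [mul_zero, add_zero] at this
    have hsqrt : exp (log c / 2) = √c := by rw [sqrt_eq_rpow, rpow_def_of_pos hc]; ring_nf
    exact hsqrt ▸ (continuous_exp.tendsto _).comp this
  refine hlow.liminf_eq ▸ liminf_le_liminf ?_ hlow.isBoundedUnder_ge
    (isCoboundedUnder_ge_of_le _ (geomMean_le_one (fun k => (ha k).le) ha1))
  filter_upwards [eventually_ge_atTop 1] with n hn
  obtain ⟨m, rfl⟩ := Nat.exists_eq_add_of_le' hn
  have : log c / 2 + K / 2 * ((m + 1 : ℕ) : ℝ)⁻¹ =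
      ((m + 1 : ℕ) : ℝ)⁻¹ * ((m * log c + 2 * y 0 + y 1) / 2) := by
    field_simp; push_cast; ring
  rw [geomMean_eq_exp ha, exp_le_exp, this]
  exact mul_le_mul_of_nonneg_left (by linarith [hsum m, hy (m + 1)]) (by positivity)

end geomMean

section psi

variable {x : ℝ}

lemma psi_zero : psi 0 = 1 := if_pos rfl

lemma psi_of_ne (hx : x ≠ 0) : psi x = (1 - exp (-x)) / x := if_neg hx

lemma psi_pos (hx : 0 ≤ x) : 0 < psi x := by
  rcases hx.eq_or_lt with rfl | hx
  · rw [psi_zero]; exact one_pos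
  rw [psi_of_ne hx.ne']
  exact div_pos (by linarith [exp_lt_one_iff.2 (neg_lt_zero.2 hx)]) hx

lemma psi_le_one (hx : 0 ≤ x) : psi x ≤ 1 := by
  rcases hx.eq_or_lt with rfl | hx
  · rw [psi_zero]
  rw [psi_of_ne hx.ne', div_le_one hx]
  linarith [add_one_le_exp (-x)]

/-- `ψ x` is the slope of the strictly convex `exp` between `-x` and `0`. -/
lemma psi_strictAntiOn : StrictAntiOn psi (Ioi 0) := by
  intro x hx x' hx' hxx'
  have key := strictConvexOn_exp.secant_strict_mono (mem_univ 0) (mem_univ (-x'))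
    (mem_univ (-x)) (neg_ne_zero.2 (ne_of_gt hx')) (neg_ne_zero.2 (ne_of_gt hx)) (neg_lt_neg hxx')
  rw [psi_of_ne (ne_of_gt hx), psi_of_ne (ne_of_gt hx')]
  convert key using 1 <;> simp only [exp_zero, sub_zero] <;> rw [← neg_div_neg_eq] <;> ring_nf

lemma psi_antitoneOn : AntitoneOn psi (Ici 0) := by
  intro x hx x' hx' hxx'
  rcases (mem_Ici.1 hx).eq_or_lt with rfl | hx0
  · simpa only [psi_zero] using psi_le_one hx'
  rcases hxx'.eq_or_lt with rfl | hlt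
  · rfl
  exact (psi_strictAntiOn hx0 (hx0.trans hlt) hlt).le

lemma continuous_psi : Continuous psi := by
  refine continuous_iff_continuousAt.2 fun x => ?_
  rcases eq_or_ne x 0 with rfl | hx
  · have hslope := hasDerivAt_iff_tendsto_slope.1
      (((hasDerivAt_neg' (0 : ℝ)).exp).const_sub 1)
    rw [← continuousWithinAt_compl_self, ContinuousWithinAt]
    simp only [neg_zero, exp_zero, mul_neg, mul_one] at hslope
    refine (hslope.congr' ?_).trans_eq ?_
    · filter_upwards [self_mem_nhdsWithin] with y hy
      rw [psi_of_ne hy, slope_def_field]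
      simp
    · rw [psi_zero, neg_neg]
  · have hcont : ContinuousAt (fun y => (1 - exp (-y)) / y) x :=
      ContinuousAt.div (by fun_prop) continuousAt_id hx
    refine hcont.congr ?_
    filter_upwards [isOpen_ne.mem_nhds hx] with y hy
    exact (psi_of_ne hy).symm

end psi

lemma one_sub_exp_neg_eq_mul_psi (z : ℝ) : 1 - exp (-z) = z * psi z := by
  rcases eq_or_ne z 0 with rfl | hz
  · simp
  rw [psi_of_ne hz]; field_simp

lemma psi_mul_le_psi_mul {β x y : ℝ} (hβ : 0 ≤ β) (hx : 0 ≤ x) (hxy : x ≤ y) :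
    psi (β * y) ≤ psi (β * x) :=
  psi_antitoneOn (mem_Ici.2 (mul_nonneg hβ hx)) (mem_Ici.2 (mul_nonneg hβ (hx.trans hxy)))
    (mul_le_mul_of_nonneg_left hxy hβ)

/-- One of `w` and `f w` is at most `p`: as `f` decreases past `c ≤ p`, `p < w` forces
`f w ≤ f p = p`. -/
lemma psi_mul_psi_le_of_antitoneOn {f : ℝ → ℝ} {β c p w : ℝ} (hβ : 0 ≤ β) (hp : 0 ≤ p)
    (hfix : f p = p) (hcp : c ≤ p) (hanti : AntitoneOn f (Ici c)) (hw : 0 ≤ w) (hwc : w ≤ f c)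
    (hfw : 0 ≤ f w) (hfwc : f w ≤ f c) :
    psi (β * p) * psi (β * f c) ≤ psi (β * w) * psi (β * f w) := by
  have hψ0 : ∀ z, 0 ≤ z → 0 ≤ psi (β * z) := fun z hz => (psi_pos (mul_nonneg hβ hz)).le
  rcases le_or_gt w p with hwp | hpw
  · exact mul_le_mul (psi_mul_le_psi_mul hβ hw hwp) (psi_mul_le_psi_mul hβ hfw hfwc)
      (hψ0 _ (hfw.trans hfwc)) (hψ0 _ hw)
  · have hfwp : f w ≤ p := hfix ▸ hanti (mem_Ici.2 hcp) (mem_Ici.2 (hcp.trans hpw.le)) hpw.le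
    rw [mul_comm (psi (β * p))]
    exact mul_le_mul (psi_mul_le_psi_mul hβ hw hwc) (psi_mul_le_psi_mul hβ hfw hfwp)
      (hψ0 _ hp) (hψ0 _ hw)

noncomputable section

-- `sqrtDisc α y = √(1 - 4 (1 - α) y (1 - y))`, the root occurring in `g`
def sqrtDisc (α y : ℝ) : ℝ := √(α + (1 - α) * (1 - 2 * y) ^ 2)

def gRatio (α y : ℝ) : ℝ := (1 - y) / (1 + sqrtDisc α y)

def gSmooth (α y : ℝ) : ℝ := 8 * (1 - α) * y * gRatio α y ^ 3

-- `discTerm α y = -(d/dy) log (1 + sqrtDisc α y)`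
def discTerm (α y : ℝ) : ℝ := 2 * (1 - α) * (1 - 2 * y) / (sqrtDisc α y * (1 + sqrtDisc α y))

def discTermDeriv (α y : ℝ) : ℝ :=
  4 * (1 - α) * (sqrtDisc α y ^ 3 - α * (1 + 2 * sqrtDisc α y)) /
    (sqrtDisc α y ^ 3 * (1 + sqrtDisc α y) ^ 2)

def gLogDeriv (α y : ℝ) : ℝ := 1 / y - 3 / (1 - y) + 3 * discTerm α y

end

section sqrtDisc

variable {α y : ℝ}

lemma sqrtDisc_nonneg : 0 ≤ sqrtDisc α y := sqrt_nonneg _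

lemma one_add_sqrtDisc_pos : 0 < 1 + sqrtDisc α y := by
  linarith [sqrtDisc_nonneg (α := α) (y := y)]

lemma sqrtDisc_radicand_pos (h0 : 0 < α) (h1 : α < 1) : 0 < α + (1 - α) * (1 - 2 * y) ^ 2 := by
  have := sub_pos.2 h1; positivity

lemma sqrtDisc_pos (h0 : 0 < α) (h1 : α < 1) : 0 < sqrtDisc α y :=
  sqrt_pos.2 (sqrtDisc_radicand_pos h0 h1)

lemma sqrtDisc_sq (h0 : 0 ≤ α) (h1 : α ≤ 1) :
    sqrtDisc α y ^ 2 = α + (1 - α) * (1 - 2 * y) ^ 2 :=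
  sq_sqrt (by have := sub_nonneg.2 h1; positivity)

lemma sqrtDisc_zero : sqrtDisc α 0 = 1 := by simp [sqrtDisc]

lemma continuous_sqrtDisc : Continuous (sqrtDisc α) := by
  unfold sqrtDisc; fun_prop

lemma hasDerivAt_sqrtDisc (h0 : 0 < α) (h1 : α < 1) :
    HasDerivAt (sqrtDisc α) (-2 * (1 - α) * (1 - 2 * y) / sqrtDisc α y) y := by
  have hD : HasDerivAt (fun y => α + (1 - α) * (1 - 2 * y) ^ 2)
      (-4 * (1 - α) * (1 - 2 * y)) y :=
    ((((hasDerivAt_id' y).const_mul 2).const_sub 1).fun_pow 2).const_mul (1 - α) |>.const_add α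
      |>.congr_deriv (by norm_num; ring)
  refine (hD.sqrt (sqrtDisc_radicand_pos h0 h1).ne').congr_deriv ?_
  have hS := sqrtDisc_pos (y := y) h0 h1
  change _ / (2 * sqrtDisc α y) = _
  field_simp
  ring

end sqrtDisc

section gSmooth

variable {α y : ℝ}

lemma g_eq_gSmooth (h0 : 0 ≤ α) (h1 : α < 1) (hy0 : 0 ≤ y) :
    g α y = gSmooth α y := by
  rcases hy0.eq_or_lt with rfl | hy0
  · simp [g, gSmooth]
  have hS := sqrtDisc_sq (y := y) h0 h1.le
  have hS1 := one_add_sqrtDisc_pos (α := α) (y := y)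
  -- rationalize, using `(1 - S) (1 + S) = 1 - S²`
  have h1S : 1 - sqrtDisc α y = 4 * (1 - α) * y * (1 - y) / (1 + sqrtDisc α y) := by
    rw [eq_div_iff hS1.ne']; linear_combination -hS
  have hroot : √(1 - 4 * (1 - α) * y * (1 - y)) = sqrtDisc α y := by
    unfold sqrtDisc; congr 1; ring
  rw [g, if_neg hy0.ne', hroot, h1S, gSmooth, gRatio]
  field_simp
  ring

lemma gRatio_pos (hy1 : y < 1) : 0 < gRatio α y :=
  div_pos (by linarith) one_add_sqrtDisc_pos

lemma gRatio_nonneg (hy1 : y ≤ 1) : 0 ≤ gRatio α y :=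
  div_nonneg (by linarith) one_add_sqrtDisc_pos.le

lemma gRatio_le (hy1 : y ≤ 1) : gRatio α y ≤ 1 - y :=
  div_le_self (by linarith) (by linarith [sqrtDisc_nonneg (α := α) (y := y)])

lemma gRatio_zero : gRatio α 0 = 1 / 2 := by
  rw [gRatio, sqrtDisc_zero]; norm_num

lemma continuous_gRatio : Continuous (gRatio α) :=
  ((continuous_const.sub continuous_id).div (continuous_const.add continuous_sqrtDisc))
    fun _ => one_add_sqrtDisc_pos.ne'

lemma continuous_gSmooth : Continuous (gSmooth α) := by
  unfold gSmooth; have := continuous_gRatio (α := α); fun_prop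

lemma gSmooth_pos (h1 : α < 1) (hy0 : 0 < y) (hy1 : y < 1) : 0 < gSmooth α y := by
  have := gRatio_pos (α := α) hy1
  unfold gSmooth; have := sub_pos.2 h1; positivity

lemma gSmooth_nonneg (h1 : α ≤ 1) (hy0 : 0 ≤ y) (hy1 : y ≤ 1) : 0 ≤ gSmooth α y := by
  have := gRatio_nonneg (α := α) hy1
  unfold gSmooth; have := sub_nonneg.2 h1; positivity

lemma gSmooth_le (h0 : 0 ≤ α) (hy0 : 0 ≤ y) (hy1 : y ≤ 1) :
    gSmooth α y ≤ 27 / 32 := by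
  have hq0 : 0 ≤ gRatio α y := gRatio_nonneg hy1
  have hq : gRatio α y ^ 3 ≤ (1 - y) ^ 3 := pow_le_pow_left₀ hq0 (gRatio_le hy1) 3
  have hy : y * (1 - y) ^ 3 ≤ 27 / 256 := by
    nlinarith [sq_nonneg (4 * y - 1), sq_nonneg (1 - y), sq_nonneg y,
      mul_nonneg hy0 (sub_nonneg.2 hy1)]
  calc gSmooth α y ≤ 8 * 1 * y * (1 - y) ^ 3 := by
        unfold gSmooth
        gcongr 8 * ?_ * y * ?_
        linarith
    _ ≤ 27 / 32 := by linarith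

end gSmooth

section derivatives

variable {α y : ℝ}

lemma hasDerivAt_gRatio (h0 : 0 < α) (h1 : α < 1) (hy1 : y ≠ 1) :
    HasDerivAt (gRatio α) (gRatio α y * (discTerm α y - 1 / (1 - y))) y := by
  have hS := sqrtDisc_pos (y := y) h0 h1
  have hS1 := one_add_sqrtDisc_pos (α := α) (y := y)
  have h1y : 1 - y ≠ 0 := sub_ne_zero.2 hy1.symm
  refine (((hasDerivAt_id' y).const_sub 1).fun_div ((hasDerivAt_sqrtDisc h0 h1).const_add 1)
    hS1.ne').congr_deriv ?_
  rw [gRatio, discTerm]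
  field_simp
  ring

lemma discTerm_lt (h0 : 0 < α) (h1 : α < 1) (hy1 : y < 1) : discTerm α y < 1 / (1 - y) := by
  have hS := sqrtDisc_pos (y := y) h0 h1
  have hS2 := sqrtDisc_sq (y := y) h0.le h1.le
  have hS1 := one_add_sqrtDisc_pos (α := α) (y := y)
  set s := sqrtDisc α y
  -- with `m := (1 - α) - α - 2 (1 - α) y` one has `s² - m² = 4 α (1 - α) (1 - y)² > 0`
  have hm : (1 - α) - α - 2 * (1 - α) * y < s := by
    have hsq : ((1 - α) - α - 2 * (1 - α) * y) ^ 2 < s ^ 2 := by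
      rw [hS2]; nlinarith [mul_pos (mul_pos h0 (sub_pos.2 h1)) (pow_pos (sub_pos.2 hy1) 2)]
    exact abs_lt_of_sq_lt_sq' hsq hS.le |>.2
  rw [discTerm, div_lt_div_iff₀ (by positivity) (sub_pos.2 hy1)]
  nlinarith

lemma gRatio_strictAntiOn (h0 : 0 < α) (h1 : α < 1) : StrictAntiOn (gRatio α) (Iic 1) := by
  refine strictAntiOn_of_deriv_neg (convex_Iic 1) continuous_gRatio.continuousOn fun y hy => ?_
  rw [interior_Iic] at hy
  rw [(hasDerivAt_gRatio h0 h1 hy.ne).deriv]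
  exact mul_neg_of_pos_of_neg (gRatio_pos hy) (sub_neg.2 (discTerm_lt h0 h1 hy))

lemma hasDerivAt_gSmooth (h0 : 0 < α) (h1 : α < 1) (hy0 : y ≠ 0) (hy1 : y ≠ 1) :
    HasDerivAt (gSmooth α) (gSmooth α y * gLogDeriv α y) y := by
  have h1y : 1 - y ≠ 0 := sub_ne_zero.2 hy1.symm
  refine (((hasDerivAt_id' y).const_mul (8 * (1 - α))).fun_mul
    ((hasDerivAt_gRatio h0 h1 hy1).fun_pow 3)).congr_deriv ?_
  rw [gSmooth, gLogDeriv]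
  field_simp
  ring

lemma hasDerivAt_discTerm (h0 : 0 < α) (h1 : α < 1) :
    HasDerivAt (discTerm α) (discTermDeriv α y) y := by
  have hS := sqrtDisc_pos (y := y) h0 h1
  have hS2 := sqrtDisc_sq (y := y) h0.le h1.le
  have hS1 := one_add_sqrtDisc_pos (α := α) (y := y)
  have hS' := hasDerivAt_sqrtDisc (y := y) h0 h1
  refine ((((hasDerivAt_id' y).const_mul 2).const_sub 1).const_mul (2 * (1 - α)) |>.fun_div
    (hS'.fun_mul (hS'.const_add 1)) (by positivity)).congr_deriv ?_
  rw [discTermDeriv]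
  field_simp
  linear_combination (-4 * (1 - α) * (1 + 2 * sqrtDisc α y)) * hS2

lemma discTermDeriv_le (h0 : 0 < α) (h1 : α < 1) : discTermDeriv α y ≤ 4 * (1 - α) := by
  have hS := sqrtDisc_pos (y := y) h0 h1
  have hc := sub_pos.2 h1
  rw [discTermDeriv, div_le_iff₀ (by positivity)]
  have : α * (1 + 2 * sqrtDisc α y) ≥ 0 := by positivity
  have : sqrtDisc α y ^ 3 ≤ sqrtDisc α y ^ 3 * (1 + sqrtDisc α y) ^ 2 :=
    le_mul_of_one_le_right (by positivity) (one_le_pow₀ (by linarith))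
  nlinarith

lemma twelve_le_inv_sq_add (hy0 : 0 < y) (hy1 : y < 1) : 12 ≤ 1 / y ^ 2 + 3 / (1 - y) ^ 2 := by
  have h1y : 0 < 1 - y := sub_pos.2 hy1
  have k1 : 4 * y * (1 - y) ≤ 1 := by nlinarith [sq_nonneg (1 - 2 * y)]
  have k2 : 12 * (y * (1 - y)) ^ 2 ≤ 3 * (y * (1 - y)) := by
    nlinarith [mul_nonneg (mul_nonneg hy0.le h1y.le) (sub_nonneg.2 k1)]
  rw [div_add_div _ _ (by positivity) (by positivity), le_div_iff₀ (by positivity)]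
  nlinarith [sq_nonneg (14 * y - 5)]

lemma hasDerivAt_gLogDeriv (h0 : 0 < α) (h1 : α < 1) (hy0 : y ≠ 0) (hy1 : y ≠ 1) :
    HasDerivAt (gLogDeriv α)
      (-(1 / y ^ 2) - 3 / (1 - y) ^ 2 + 3 * discTermDeriv α y) y := by
  have h1y : 1 - y ≠ 0 := sub_ne_zero.2 hy1.symm
  refine (((hasDerivAt_const y 1).fun_div (hasDerivAt_id' y) hy0).sub
    ((hasDerivAt_const y 3).fun_div ((hasDerivAt_id' y).const_sub 1) h1y)).add
    ((hasDerivAt_discTerm h0 h1).const_mul 3) |>.congr_deriv ?_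
  field_simp
  ring

lemma continuousOn_gLogDeriv (h0 : 0 < α) (h1 : α < 1) : ContinuousOn (gLogDeriv α) (Ioo 0 1) :=
  fun _ hy => (hasDerivAt_gLogDeriv h0 h1 hy.1.ne' hy.2.ne).continuousAt.continuousWithinAt

lemma gLogDeriv_strictAntiOn (h0 : 0 < α) (h1 : α < 1) :
    StrictAntiOn (gLogDeriv α) (Ioo 0 1) := by
  refine strictAntiOn_of_deriv_neg (convex_Ioo 0 1) (continuousOn_gLogDeriv h0 h1) fun y hy => ?_
  rw [interior_Ioo] at hy
  rw [(hasDerivAt_gLogDeriv h0 h1 hy.1.ne' hy.2.ne).deriv]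
  linarith [twelve_le_inv_sq_add hy.1 hy.2, discTermDeriv_le (y := y) h0 h1]

lemma exists_gLogDeriv_eq_zero (h0 : 0 < α) (h1 : α < 1) :
    ∃ y ∈ Ioo (0 : ℝ) (1 / 2), gLogDeriv α y = 0 := by
  have hcont : ContinuousOn (gLogDeriv α) (Icc (1 / 5) (1 / 2)) :=
    (continuousOn_gLogDeriv h0 h1).mono (Icc_subset_Ioo (by norm_num) (by norm_num))
  have hneg : gLogDeriv α (1 / 2) < 0 := by
    norm_num [gLogDeriv, discTerm]
  have hpos : 0 < gLogDeriv α (1 / 5) := by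
    have : 0 ≤ discTerm α (1 / 5) := by
      have := sqrtDisc_pos (y := 1 / 5) h0 h1
      unfold discTerm; have := sub_pos.2 h1; positivity
    rw [gLogDeriv]; norm_num; linarith
  obtain ⟨y, hy, hy0⟩ := intermediate_value_Ioo' (by norm_num) hcont ⟨hneg, hpos⟩
  exact ⟨y, ⟨by linarith [hy.1], hy.2⟩, hy0⟩

end derivatives

section tmap

variable {α β x : ℝ}

lemma one_sub_exp_neg_mem_Ico (hβ : 0 ≤ β) (hx : 0 ≤ x) : 1 - exp (-(β * x)) ∈ Ico 0 1 :=
  ⟨by linarith [exp_le_one_iff.2 (neg_nonpos.2 (mul_nonneg hβ hx))],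
    by linarith [exp_pos (-(β * x))]⟩

lemma strictMono_one_sub_exp_neg_mul (hβ : 0 < β) : StrictMono fun x => 1 - exp (-(β * x)) :=
  fun _ _ h => by simpa using exp_lt_exp.2 (neg_lt_neg (mul_lt_mul_of_pos_left h hβ))

lemma one_sub_exp_neg_mem_Ioo (hβ : 0 < β) (hx : 0 < x) : 1 - exp (-(β * x)) ∈ Ioo 0 1 :=
  ⟨by simpa using strictMono_one_sub_exp_neg_mul hβ hx, (one_sub_exp_neg_mem_Ico hβ.le hx.le).2⟩

lemma tmap_eq_gSmooth (h0 : 0 ≤ α) (h1 : α < 1) (hβ : 0 ≤ β) (hx : 0 ≤ x) :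
    tmap α β x = gSmooth α (1 - exp (-(β * x))) :=
  g_eq_gSmooth h0 h1 (one_sub_exp_neg_mem_Ico hβ hx).1

lemma tmap_zero : tmap α β 0 = 0 := by simp [tmap, g]

lemma tmap_nonneg (h0 : 0 ≤ α) (h1 : α < 1) (hβ : 0 ≤ β) (hx : 0 ≤ x) : 0 ≤ tmap α β x := by
  have hu := one_sub_exp_neg_mem_Ico hβ hx
  rw [tmap_eq_gSmooth h0 h1 hβ hx]
  exact gSmooth_nonneg h1.le hu.1 hu.2.le

lemma tmap_pos (h0 : 0 ≤ α) (h1 : α < 1) (hβ : 0 < β) (hx : 0 < x) : 0 < tmap α β x := by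
  rw [tmap_eq_gSmooth h0 h1 hβ.le hx.le]
  exact gSmooth_pos h1 (one_sub_exp_neg_mem_Ioo hβ hx).1 (one_sub_exp_neg_mem_Ioo hβ hx).2

lemma tmap_lt_one (h0 : 0 ≤ α) (h1 : α < 1) (hβ : 0 ≤ β) (hx : 0 ≤ x) : tmap α β x < 1 := by
  have hu := one_sub_exp_neg_mem_Ico hβ hx
  rw [tmap_eq_gSmooth h0 h1 hβ hx]
  exact (gSmooth_le h0 hu.1 hu.2.le).trans_lt (by norm_num)

lemma continuousOn_tmap (h0 : 0 ≤ α) (h1 : α < 1) (hβ : 0 ≤ β) :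
    ContinuousOn (tmap α β) (Ici 0) := by
  refine ContinuousOn.congr ?_ fun x hx => tmap_eq_gSmooth h0 h1 hβ hx
  exact (continuous_gSmooth.comp (by fun_prop)).continuousOn

lemma hasDerivAt_tmap (h0 : 0 < α) (h1 : α < 1) (hβ : 0 < β) (hx : 0 < x) :
    HasDerivAt (tmap α β)
      (gSmooth α (1 - exp (-(β * x))) * gLogDeriv α (1 - exp (-(β * x))) *
        (β * exp (-(β * x)))) x := by
  have hu := one_sub_exp_neg_mem_Ioo hβ hx
  have hexp : HasDerivAt (fun x => 1 - exp (-(β * x))) (β * exp (-(β * x))) x :=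
    ((((hasDerivAt_id' x).const_mul β).fun_neg).exp.const_sub 1).congr_deriv (by ring)
  refine ((hasDerivAt_gSmooth h0 h1 hu.1.ne' hu.2.ne).comp x hexp).congr_of_eventuallyEq ?_
  filter_upwards [Ioi_mem_nhds hx] with y hy
  exact tmap_eq_gSmooth h0.le h1 hβ.le (le_of_lt hy)

lemma tmap_div_eq (h0 : 0 ≤ α) (h1 : α < 1) (hβ : 0 < β) (hx : 0 < x) :
    tmap α β x / x = 8 * (1 - α) * β * psi (β * x) * gRatio α (1 - exp (-(β * x))) ^ 3 := by
  rw [tmap_eq_gSmooth h0 h1 hβ.le hx.le, gSmooth, one_sub_exp_neg_eq_mul_psi (β * x)]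
  field_simp

lemma tmap_div_strictAntiOn (h0 : 0 < α) (h1 : α < 1) (hβ : 0 < β) :
    StrictAntiOn (fun x => tmap α β x / x) (Ioi 0) := by
  intro x hx x' hx' hxx'
  dsimp only
  rw [tmap_div_eq h0.le h1 hβ hx, tmap_div_eq h0.le h1 hβ hx']
  have hψ : psi (β * x') < psi (β * x) :=
    psi_strictAntiOn (mul_pos hβ hx) (mul_pos hβ hx') (mul_lt_mul_of_pos_left hxx' hβ)
  have hq : gRatio α (1 - exp (-(β * x'))) < gRatio α (1 - exp (-(β * x))) :=
    gRatio_strictAntiOn h0 h1 (one_sub_exp_neg_mem_Ico hβ.le hx.le).2.le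
      (one_sub_exp_neg_mem_Ico hβ.le hx'.le).2.le (strictMono_one_sub_exp_neg_mul hβ hxx')
  have hq' := gRatio_pos (α := α) (one_sub_exp_neg_mem_Ico hβ.le hx'.le).2
  have hc : 0 < 8 * (1 - α) * β := by have := sub_pos.2 h1; positivity
  rw [mul_assoc _ (psi _), mul_assoc _ (psi _)]
  exact mul_lt_mul_of_pos_left (mul_lt_mul'' hψ (pow_lt_pow_left₀ hq hq'.le (by norm_num))
    (psi_pos (mul_pos hβ hx').le).le (by positivity)) hc

lemma tendsto_tmap_div (h0 : 0 ≤ α) (h1 : α < 1) (hβ : 0 < β) :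
    Tendsto (fun x => tmap α β x / x) (𝓝[>] 0) (𝓝 ((1 - α) * β)) := by
  have hcont : Continuous fun x =>
      8 * (1 - α) * β * psi (β * x) * gRatio α (1 - exp (-(β * x))) ^ 3 := by
    have := continuous_psi; have := continuous_gRatio (α := α); fun_prop
  have hlim := hcont.tendsto 0
  simp only [mul_zero, psi_zero, neg_zero, exp_zero, sub_self, gRatio_zero] at hlim
  refine (hlim.mono_left nhdsWithin_le_nhds).congr' ?_ |>.trans_eq (by congr 1; ring)
  filter_upwards [self_mem_nhdsWithin] with x hx
  exact (tmap_div_eq h0 h1 hβ hx).symm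

lemma exists_fixedPt (h0 : 0 < α) (h1 : α < 1) (hβ : 0 < β) (hφ : 1 < (1 - α) * β) :
    ∃ p ∈ Ioo (0 : ℝ) 1, tmap α β p = p ∧ (∀ x ∈ Ioo 0 p, x < tmap α β x) ∧
      ∀ x, p < x → tmap α β x < x := by
  have hanti := tmap_div_strictAntiOn h0 h1 hβ
  obtain ⟨x₀, hx₀, hx₀1⟩ := ((tendsto_tmap_div h0.le h1 hβ).eventually (lt_mem_nhds hφ)).and
    (Ioo_mem_nhdsGT (zero_lt_one' ℝ)) |>.exists
  have hcont : ContinuousOn (fun x => tmap α β x / x) (Icc x₀ 1) :=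
    ((continuousOn_tmap h0.le h1 hβ.le).mono fun y hy => hx₀1.1.le.trans hy.1).div
      continuousOn_id fun y hy => (hx₀1.1.trans_le hy.1).ne'
  have h1lt : tmap α β 1 / 1 < 1 :=
    (div_one _).trans_lt (tmap_lt_one h0.le h1 hβ.le zero_le_one)
  obtain ⟨p, hp, hp1⟩ := intermediate_value_Ioo' hx₀1.2.le hcont ⟨h1lt, hx₀⟩
  have hp0 : 0 < p := hx₀1.1.trans hp.1
  have hfix : tmap α β p = p := by simpa [div_eq_one_iff_eq hp0.ne'] using hp1
  refine ⟨p, ⟨hp0, hp.2⟩, hfix, fun x hx => ?_, fun x hx => ?_⟩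
  · have := hanti hx.1 hp0 hx.2
    simp only [hp1] at this
    rwa [one_lt_div hx.1] at this
  · have := hanti hp0 (hp0.trans hx) hx
    simp only [hp1] at this
    rwa [div_lt_one (hp0.trans hx)] at this

end tmap

section critPt

variable {α β c x : ℝ}

lemma exists_critPt (h0 : 0 < α) (h1 : α < 1) (hβ : 0 < β) (hφ : 1 < (1 - α) * β) :
    ∃ c ∈ Ioo (0 : ℝ) 1, gLogDeriv α (1 - exp (-(β * c))) = 0 := by
  obtain ⟨y, hy, hy0⟩ := exists_gLogDeriv_eq_zero h0 h1
  have h1y : 0 < 1 - y := by linarith [hy.2]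
  have hβ1 : 1 < β := by nlinarith
  -- `exp (-β) < exp (-1) < 1 / 2 < 1 - y`
  have hexp : exp (-β) < 1 - y := by
    have : 2 < exp 1 := by linarith [add_one_lt_exp (one_ne_zero' ℝ)]
    have : exp (-β) * exp 1 < 1 := by
      rw [← exp_add, exp_lt_one_iff]; linarith
    nlinarith [exp_pos (-β), hy.2]
  refine ⟨-log (1 - y) / β, ⟨div_pos ?_ hβ, ?_⟩, ?_⟩
  · linarith [log_neg h1y (by linarith [hy.1])]
  · rw [div_lt_one hβ, neg_lt]
    simpa using log_lt_log (exp_pos _) hexp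
  · rwa [mul_div_cancel₀ _ hβ.ne', neg_neg, exp_log h1y, sub_sub_cancel]

lemma deriv_tmap_eq (h0 : 0 < α) (h1 : α < 1) (hβ : 0 < β) (hx : 0 < x) :
    deriv (tmap α β) x = gSmooth α (1 - exp (-(β * x))) * gLogDeriv α (1 - exp (-(β * x))) *
      (β * exp (-(β * x))) :=
  (hasDerivAt_tmap h0 h1 hβ hx).deriv

lemma deriv_tmap_pos (h0 : 0 < α) (h1 : α < 1) (hβ : 0 < β) (hc : 0 < c)
    (hF : gLogDeriv α (1 - exp (-(β * c))) = 0) (hx : 0 < x) (hxc : x < c) :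
    0 < deriv (tmap α β) x := by
  have hu := one_sub_exp_neg_mem_Ioo hβ hx
  have hG : 0 < gLogDeriv α (1 - exp (-(β * x))) := hF ▸
    gLogDeriv_strictAntiOn h0 h1 hu (one_sub_exp_neg_mem_Ioo hβ hc)
      (strictMono_one_sub_exp_neg_mul hβ hxc)
  rw [deriv_tmap_eq h0 h1 hβ hx]
  have := gSmooth_pos h1 hu.1 hu.2
  positivity

lemma deriv_tmap_neg (h0 : 0 < α) (h1 : α < 1) (hβ : 0 < β) (hc : 0 < c)
    (hF : gLogDeriv α (1 - exp (-(β * c))) = 0) (hcx : c < x) :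
    deriv (tmap α β) x < 0 := by
  have hx := hc.trans hcx
  have hu := one_sub_exp_neg_mem_Ioo hβ hx
  have hG : gLogDeriv α (1 - exp (-(β * x))) < 0 := hF ▸
    gLogDeriv_strictAntiOn h0 h1 (one_sub_exp_neg_mem_Ioo hβ hc) hu
      (strictMono_one_sub_exp_neg_mul hβ hcx)
  rw [deriv_tmap_eq h0 h1 hβ hx]
  exact mul_neg_of_neg_of_pos (mul_neg_of_pos_of_neg (gSmooth_pos h1 hu.1 hu.2) hG)
    (by positivity)

lemma tmap_strictMonoOn (h0 : 0 < α) (h1 : α < 1) (hβ : 0 < β) (hc : 0 < c)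
    (hF : gLogDeriv α (1 - exp (-(β * c))) = 0) : StrictMonoOn (tmap α β) (Icc 0 c) := by
  refine strictMonoOn_of_deriv_pos (convex_Icc 0 c)
    ((continuousOn_tmap h0.le h1 hβ.le).mono fun y hy => hy.1) fun x hx => ?_
  rw [interior_Icc] at hx
  exact deriv_tmap_pos h0 h1 hβ hc hF hx.1 hx.2

lemma tmap_strictAntiOn (h0 : 0 < α) (h1 : α < 1) (hβ : 0 < β) (hc : 0 < c)
    (hF : gLogDeriv α (1 - exp (-(β * c))) = 0) : StrictAntiOn (tmap α β) (Ici c) := by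
  refine strictAntiOn_of_deriv_neg (convex_Ici c)
    ((continuousOn_tmap h0.le h1 hβ.le).mono fun y hy => hc.le.trans hy) fun x hx => ?_
  rw [interior_Ici] at hx
  exact deriv_tmap_neg h0 h1 hβ hc hF hx

lemma deriv_tmap_critPt (h0 : 0 < α) (h1 : α < 1) (hβ : 0 < β) (hc : 0 < c)
    (hF : gLogDeriv α (1 - exp (-(β * c))) = 0) : deriv (tmap α β) c = 0 := by
  rw [deriv_tmap_eq h0 h1 hβ hc, hF, mul_zero, zero_mul]

lemma eq_critPt_of_deriv_tmap_eq_zero (h0 : 0 < α) (h1 : α < 1) (hβ : 0 < β) (hc : 0 < c)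
    (hF : gLogDeriv α (1 - exp (-(β * c))) = 0) (hx : 0 < x) (hd : deriv (tmap α β) x = 0) :
    x = c := by
  rcases lt_trichotomy x c with h | h | h
  · exact absurd hd (deriv_tmap_pos h0 h1 hβ hc hF hx h).ne'
  · exact h
  · exact absurd hd (deriv_tmap_neg h0 h1 hβ hc hF h).ne

lemma tmap_le_tmap_critPt (h0 : 0 < α) (h1 : α < 1) (hβ : 0 < β) (hc : 0 < c)
    (hF : gLogDeriv α (1 - exp (-(β * c))) = 0) (hx : 0 ≤ x) : tmap α β x ≤ tmap α β c := by
  rcases le_total x c with h | h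
  · exact (tmap_strictMonoOn h0 h1 hβ hc hF).monotoneOn ⟨hx, h⟩ ⟨hc.le, le_rfl⟩ h
  · exact (tmap_strictAntiOn h0 h1 hβ hc hF).antitoneOn (mem_Ici.2 le_rfl) h h

end critPt

section sigma

variable {α β c p : ℝ}

lemma mapsTo_tmap_Ici (h0 : 0 ≤ α) (h1 : α < 1) (hβ : 0 ≤ β) : MapsTo (tmap α β) (Ici 0) (Ici 0) :=
  fun _ hx => tmap_nonneg h0 h1 hβ hx

lemma le_pbar (h0 : 0 ≤ α) (h1 : α < 1) {y : ℝ} (hy : y ∈ Icc 0 1) : g α y ≤ pbar α := by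
  refine le_csSup ⟨27 / 32, ?_⟩ (mem_image_of_mem _ hy)
  rintro _ ⟨z, hz, rfl⟩
  rw [g_eq_gSmooth h0 h1 hz.1]
  exact gSmooth_le h0 hz.1 hz.2

lemma pbar_pos (h0 : 0 ≤ α) (h1 : α < 1) : 0 < pbar α := by
  refine (gSmooth_pos h1 one_half_pos one_half_lt_one).trans_le ?_
  rw [← g_eq_gSmooth h0 h1 one_half_pos.le]
  exact le_pbar h0 h1 ⟨one_half_pos.le, one_half_lt_one.le⟩

lemma sigma_eq_sInf : sigma α β =
    sInf ((fun x => liminf (geomMean fun k => psi (β * (tmap α β)^[k] x)) atTop) ''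
      Icc 0 (pbar α)) := rfl

lemma liminf_geomMean_psi_iterate_zero :
    liminf (geomMean fun k => psi (β * (tmap α β)^[k] 0)) atTop = 1 := by
  have h : (geomMean fun k => psi (β * (tmap α β)^[k] 0)) = fun _ => 1 := by
    funext n
    simp [geomMean, Function.iterate_fixed tmap_zero, psi_zero]
  rw [h, liminf_const]

lemma sigma_eq_psi_of_tendsto (h0 : 0 ≤ α) (h1 : α < 1) (hβ : 0 < β) (hp : 0 < p)
    (horb : ∀ x, 0 < x → Tendsto (fun k => (tmap α β)^[k] x) atTop (𝓝 p)) :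
    sigma α β = psi (β * p) := by
  have hlim : ∀ x, 0 < x → liminf (geomMean fun k => psi (β * (tmap α β)^[k] x)) atTop =
      psi (β * p) := fun x hx =>
    (tendsto_geomMean (fun k => psi_pos (mul_nonneg hβ.le
        ((mapsTo_tmap_Ici h0 h1 hβ.le).iterate k (mem_Ici.2 hx.le)))) (psi_pos (mul_pos hβ hp).le)
      ((continuous_psi.tendsto _).comp ((horb x hx).const_mul β))).liminf_eq
  rw [sigma_eq_sInf]
  refine IsLeast.csInf_eq ⟨⟨pbar α, ⟨(pbar_pos h0 h1).le, le_rfl⟩, hlim _ (pbar_pos h0 h1)⟩, ?_⟩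
  rintro _ ⟨x, hx, rfl⟩
  rcases hx.1.eq_or_lt with rfl | hx0
  · simpa only [liminf_geomMean_psi_iterate_zero] using psi_le_one (mul_pos hβ hp).le
  · exact (hlim x hx0).ge

lemma sqrt_le_sigma (h0 : 0 ≤ α) (h1 : α < 1) (hβ : 0 < β) (hp : 0 < p)
    (hfix : tmap α β p = p) (hcp : c ≤ p) (hanti : AntitoneOn (tmap α β) (Ici c))
    (hmax : ∀ x, 0 ≤ x → tmap α β x ≤ tmap α β c) :
    √(psi (β * p) * psi (β * tmap α β c)) ≤ sigma α β := by
  have hmaps := mapsTo_tmap_Ici h0 h1 hβ.le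
  have hpc : p ≤ tmap α β c := hfix ▸ hmax p hp.le
  rw [sigma_eq_sInf]
  refine le_csInf ((nonempty_Icc.2 (pbar_pos h0 h1).le).image _) ?_
  rintro _ ⟨x, hx, rfl⟩
  have horb : ∀ k, 0 ≤ (tmap α β)^[k] x := fun k => hmaps.iterate k (mem_Ici.2 hx.1)
  refine sqrt_le_liminf_geomMean
    (mul_pos (psi_pos (mul_pos hβ hp).le) (psi_pos (mul_nonneg hβ.le (hp.le.trans hpc))))
    (fun k => psi_pos (mul_nonneg hβ.le (horb k)))
    (fun k => psi_le_one (mul_nonneg hβ.le (horb k))) fun k => ?_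
  simp only [Function.iterate_succ_apply']
  exact psi_mul_psi_le_of_antitoneOn hβ.le hp.le hfix hcp hanti (hmaps (horb k))
    (hmax _ (horb k)) (hmaps (hmaps (horb k))) (hmax _ (hmaps (horb k)))

end sigma

section orbit

variable {α β c p : ℝ}

lemma tendsto_iterate_tmap (h0 : 0 ≤ α) (h1 : α < 1) (hβ : 0 < β) (hp : 0 < p)
    (hfix : tmap α β p = p) (hlt : ∀ x ∈ Ioo 0 p, x < tmap α β x)
    (hgt : ∀ x, p < x → tmap α β x < x) (hmono : MonotoneOn (tmap α β) (Icc 0 c))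
    (hmax : ∀ x, 0 ≤ x → tmap α β x ≤ tmap α β c) (hcase : tmap α β c ≤ c)
    {x : ℝ} (hx : 0 < x) : Tendsto (fun k => (tmap α β)^[k] x) atTop (𝓝 p) := by
  set z := tmap α β x
  have hz : 0 < z := tmap_pos h0 h1 hβ hx
  have hzc : z ≤ c := (hmax x hx.le).trans hcase
  have hpc : p ≤ c := hfix ▸ (hmax p hp.le).trans hcase
  -- the interval `[min z p, c]` is invariant and `t` is monotone on it
  set a := min z p
  have ha : 0 < a := lt_min hz hp
  have hsub : Icc a c ⊆ Icc 0 c := Icc_subset_Icc_left ha.le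
  have hmaps : MapsTo (tmap α β) (Icc a c) (Icc a c) := by
    intro y hy
    refine ⟨?_, (hmax y (ha.le.trans hy.1)).trans hcase⟩
    rcases lt_or_ge y p with hyp | hpy
    · exact hy.1.trans (hlt y ⟨ha.trans_le hy.1, hyp⟩).le
    · exact (min_le_right z p).trans (hfix ▸ hmono ⟨hp.le, hpc⟩ (hsub hy) hpy)
  have hlim := tendsto_iterate_of_monotoneOn (hmono.mono hsub)
    ((continuousOn_tmap h0 h1 hβ.le).mono fun y hy => ha.le.trans hy.1) hmaps
    (fun y hy => eq_of_fixedPt_of_lt_of_gt hlt hgt (ha.trans_le hy.1)) ⟨min_le_left z p, hzc⟩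
  exact (tendsto_add_atTop_iff_nat 1).1 (by simpa only [Function.iterate_succ_apply] using hlim)

end orbit

theorem stmt18 (α₂ β₂ : ℝ) (hα₂ : α₂ ∈ Set.Ioo (0 : ℝ) 1) (hβ₂ : 0 < β₂)
    (hφ₂ : 1 < (1 - α₂) * β₂) :
    ∃ Pc Pf : ℝ,
      -- Pc is the unique critical point of t in (0,1)
      Pc ∈ Set.Ioo (0 : ℝ) 1 ∧ deriv (tmap α₂ β₂) Pc = 0 ∧
      (∀ x ∈ Set.Ioo (0 : ℝ) 1, deriv (tmap α₂ β₂) x = 0 → x = Pc) ∧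
      -- and it is a global maximum of t on [0,1]
      (∀ x ∈ Set.Icc (0 : ℝ) 1, tmap α₂ β₂ x ≤ tmap α₂ β₂ Pc) ∧
      -- Pf is the unique fixed point of t in (0,1)
      Pf ∈ Set.Ioo (0 : ℝ) 1 ∧ tmap α₂ β₂ Pf = Pf ∧
      (∀ x ∈ Set.Ioo (0 : ℝ) 1, tmap α₂ β₂ x = x → x = Pf) ∧
      -- (a)
      (tmap α₂ β₂ Pc ≤ Pc →
        (∀ x ∈ Set.Ioo (0 : ℝ) 1,
          Filter.Tendsto (fun k : ℕ => (tmap α₂ β₂)^[k] x) Filter.atTop (nhds Pf)) ∧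
        sigma α₂ β₂ = psi (β₂ * Pf)) ∧
      -- (b)
      (Pc < tmap α₂ β₂ Pc →
        Real.sqrt (psi (β₂ * Pf) * psi (β₂ * tmap α₂ β₂ Pc)) ≤ sigma α₂ β₂) := by
  obtain ⟨h0, h1⟩ := hα₂
  obtain ⟨Pc, hPc, hF⟩ := exists_critPt h0 h1 hβ₂ hφ₂
  obtain ⟨Pf, hPf, hfix, hlt, hgt⟩ := exists_fixedPt h0 h1 hβ₂ hφ₂
  have hmax := fun x => tmap_le_tmap_critPt (x := x) h0 h1 hβ₂ hPc.1 hF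
  refine ⟨Pc, Pf, hPc, deriv_tmap_critPt h0 h1 hβ₂ hPc.1 hF,
    fun x hx => eq_critPt_of_deriv_tmap_eq_zero h0 h1 hβ₂ hPc.1 hF hx.1,
    fun x hx => hmax x hx.1, hPf, hfix,
    fun x hx => eq_of_fixedPt_of_lt_of_gt hlt hgt hx.1, fun hcase => ?_, fun hcase => ?_⟩
  · have horb := fun x (hx : 0 < x) => tendsto_iterate_tmap h0.le h1 hβ₂ hPf.1 hfix hlt hgt
      (tmap_strictMonoOn h0 h1 hβ₂ hPc.1 hF).monotoneOn hmax hcase hx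
    exact ⟨fun x hx => horb x hx.1, sigma_eq_psi_of_tendsto h0.le h1 hβ₂ hPf.1 horb⟩
  · exact sqrt_le_sigma h0.le h1 hβ₂ hPf.1 hfix (not_lt.1 fun h => (hgt Pc h).not_gt hcase)
      (tmap_strictAntiOn h0 h1 hβ₂ hPc.1 hF).antitoneOn hmax
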